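/- For any Boolean functions f (and 0-goal function g0, 1-goal function g1 for f with goal values Q0, Q1 respectively), the function g(b) = Q1·Q0 − (Q1 − g1(b))(Q0 − g0(b)) is a monotone submodular function with g(b) = Q1·Q0 iff g1(b)=Q1 or g0(b)=Q0. Consequently Γ(f) ≤ Γ^1(f)·Γ^0(f). -/

import Mathlib

attribute [local instance] Classical.propDecidable

/-- `b'` extends the partial assignment `b`: it agrees on all non-`*` coordinates of `b`. -/
def Extends {n : ℕ} (b' b : Fin n → Option Bool) : Prop :=
  ∀ i v, b i = some v → b' i = some v

/-- A total assignment `x` extends the partial assignment `b`. -/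
def TExtends {n : ℕ} (x : Fin n → Bool) (b : Fin n → Option Bool) : Prop :=
  ∀ i v, b i = some v → x i = v

/-- `b` is a certificate of `f`: `f` is constant on all total extensions of `b`. -/
def IsCert {n : ℕ} (f : (Fin n → Bool) → Bool) (b : Fin n → Option Bool) : Prop :=
  ∀ x y, TExtends x b → TExtends y b → f x = f y

/-- `b` is a `k`-certificate of `f`: it forces `f` to the value `k`. -/
def IsKCert {n : ℕ} (f : (Fin n → Bool) → Bool) (k : Bool) (b : Fin n → Option Bool) : Prop :=
  ∀ x, TExtends x b → f x = k

/-- A certificate is minimal if no proper restriction of it is a certificate. -/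
def MinCert {n : ℕ} (f : (Fin n → Bool) → Bool) (c : Fin n → Option Bool) : Prop :=
  IsCert f c ∧ ∀ c', Extends c c' → c' ≠ c → ¬ IsCert f c'

/-- A `k`-certificate is minimal if no proper restriction of it is a `k`-certificate. -/
def MinKCert {n : ℕ} (f : (Fin n → Bool) → Bool) (k : Bool) (c : Fin n → Option Bool) : Prop :=
  IsKCert f k c ∧ ∀ c', Extends c c' → c' ≠ c → ¬ IsKCert f k c'

/-- Monotone utility function: filling in `*`'s never decreases the value. -/
def Mono {n : ℕ} (g : (Fin n → Option Bool) → ℕ) : Prop :=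
  ∀ b b', Extends b' b → g b ≤ g b'

/-- Submodular utility function: marginal gains shrink under extension. -/
def Submod {n : ℕ} (g : (Fin n → Option Bool) → ℕ) : Prop :=
  ∀ b b' (i : Fin n) (ℓ : Bool), Extends b' b → b i = none → b' i = none →
    g (Function.update b' i (some ℓ)) + g b ≤ g (Function.update b i (some ℓ)) + g b'

/-- `g` is a goal function for `f` with goal value `Q`. -/
def GoalFn {n : ℕ} (f : (Fin n → Bool) → Bool) (g : (Fin n → Option Bool) → ℕ)
    (Q : ℕ) : Prop :=
  Mono g ∧ Submod g ∧ ∀ b, g b = Q ↔ IsCert f b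

/-- `g` is a `k`-goal function for `f` with goal value `Q`. -/
def KGoalFn {n : ℕ} (f : (Fin n → Bool) → Bool) (k : Bool)
    (g : (Fin n → Option Bool) → ℕ) (Q : ℕ) : Prop :=
  Mono g ∧ Submod g ∧ (∀ b, IsKCert f k b → g b = Q) ∧ (∀ b, ¬ IsKCert f k b → g b < Q)

/-- The goal value `Γ(f)`: the minimum goal value of any goal function for `f`. -/
noncomputable def gamma {n : ℕ} (f : (Fin n → Bool) → Bool) : ℕ :=
  sInf {Q | ∃ g, GoalFn f g Q}

/-- The `k`-goal value `Γ^k(f)`. -/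
noncomputable def gammaK {n : ℕ} (f : (Fin n → Bool) → Bool) (k : Bool) : ℕ :=
  sInf {Q | ∃ g, KGoalFn f k g Q}

/-- The weight of a partial assignment: the number of non-`*` coordinates. -/
noncomputable def wt {n : ℕ} (b : Fin n → Option Bool) : ℕ :=
  (Finset.univ.filter (fun i => (b i).isSome)).card

/-- `f` depends on its `i`-th variable. -/
def DependsOnVar {n : ℕ} (f : (Fin n → Bool) → Bool) (i : Fin n) : Prop :=
  ∃ x, f (Function.update x i true) ≠ f (Function.update x i false)


/-!
Write `g = Q₁Q₀ - p₁p₀` with deficits `pₖ = Qₖ - gₖ`. Each deficit is antitone and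
supermodular, and a product of nonnegative antitone supermodular functions is again
supermodular, so `g` is monotone and submodular. The product of the deficits vanishes exactly
when one of them does, i.e. when `b` contains a 1- or a 0-certificate, which is exactly when `b`
contains a certificate. Since `k`-goal functions exist (count the total extensions of `b` on
which `f ≠ k`), `Γ(f) ≤ Γ¹(f)·Γ⁰(f)`.
-/

open Finset Function

section PartialAssignments

variable {n : ℕ}

def Supermod (p : (Fin n → Option Bool) → ℕ) : Prop :=
  ∀ b b' (i : Fin n) (ℓ : Bool), Extends b' b → b i = none → b' i = none →
    p (update b i (some ℓ)) + p b' ≤ p (update b' i (some ℓ)) + p b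

def Anti (p : (Fin n → Option Bool) → ℕ) : Prop :=
  ∀ b b', Extends b' b → p b' ≤ p b

theorem extends_update_of_eq_none {b : Fin n → Option Bool} {i : Fin n} (hb : b i = none)
    (ℓ : Bool) : Extends (update b i (some ℓ)) b := by
  intro j v hj
  rcases eq_or_ne j i with rfl | hne
  · simp [hb] at hj
  · rwa [update_of_ne hne]

theorem Extends.update {b b' : Fin n → Option Bool} (h : Extends b' b) (i : Fin n)
    (ℓ : Bool) : Extends (update b' i (some ℓ)) (update b i (some ℓ)) := by
  intro j v hj
  rcases eq_or_ne j i with rfl | hne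
  · rwa [update_self] at hj ⊢
  · rw [update_of_ne hne] at hj ⊢
    exact h j v hj

theorem Mono.anti_sub {g : (Fin n → Option Bool) → ℕ} (hg : Mono g) (Q : ℕ) :
    Anti fun b => Q - g b :=
  fun b b' h => Nat.sub_le_sub_left (hg b b' h) Q

theorem Anti.mono_sub {p : (Fin n → Option Bool) → ℕ} (hp : Anti p) (Q : ℕ) :
    Mono fun b => Q - p b :=
  fun b b' h => Nat.sub_le_sub_left (hp b b' h) Q

theorem Anti.mul {p q : (Fin n → Option Bool) → ℕ} (hp : Anti p) (hq : Anti q) :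
    Anti fun b => p b * q b :=
  fun b b' h => Nat.mul_le_mul (hp b b' h) (hq b b' h)

theorem Submod.supermod_sub {g : (Fin n → Option Bool) → ℕ} (hg : Submod g) {Q : ℕ}
    (hQ : ∀ b, g b ≤ Q) : Supermod fun b => Q - g b := by
  intro b b' i ℓ hext hb hb'
  dsimp only
  have := hg b b' i ℓ hext hb hb'
  have := hQ (update b i (some ℓ))
  have := hQ (update b' i (some ℓ))
  have := hQ b
  have := hQ b'
  omega

theorem Supermod.submod_sub {p : (Fin n → Option Bool) → ℕ} (hp : Supermod p) {Q : ℕ}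
    (hQ : ∀ b, p b ≤ Q) : Submod fun b => Q - p b := by
  intro b b' i ℓ hext hb hb'
  dsimp only
  have := hp b b' i ℓ hext hb hb'
  have := hQ (update b i (some ℓ))
  have := hQ (update b' i (some ℓ))
  have := hQ b
  have := hQ b'
  omega

/-- The difference of the two sides is
`(p₀ + p₃ - p₁ - p₂) q₀ + (p₁ - p₃)(q₀ - q₁) + (p₂ - p₃)(q₀ - q₂) + p₃ (q₀ + q₃ - q₁ - q₂)`. -/
theorem Nat.mul_add_mul_le_of_supermod {p₀ p₁ p₂ p₃ q₀ q₁ q₂ q₃ : ℕ} (hp : p₁ + p₂ ≤ p₃ + p₀)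
    (hq : q₁ + q₂ ≤ q₃ + q₀) (hp₁ : p₃ ≤ p₁) (hp₂ : p₃ ≤ p₂) (hq₁ : q₁ ≤ q₀) (hq₂ : q₂ ≤ q₀) :
    p₁ * q₁ + p₂ * q₂ ≤ p₃ * q₃ + p₀ * q₀ := by
  nlinarith

theorem Supermod.mul {p q : (Fin n → Option Bool) → ℕ} (hp : Supermod p) (hq : Supermod q)
    (hpa : Anti p) (hqa : Anti q) : Supermod fun b => p b * q b :=
  fun b b' i ℓ hext hb hb' => Nat.mul_add_mul_le_of_supermod (hp b b' i ℓ hext hb hb')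
    (hq b b' i ℓ hext hb hb') (hpa _ _ (hext.update i ℓ))
    (hpa _ _ (extends_update_of_eq_none hb' ℓ)) (hqa _ _ (extends_update_of_eq_none hb ℓ))
    (hqa _ _ hext)

end PartialAssignments

section OrCombination

variable {n : ℕ} {g0 g1 : (Fin n → Option Bool) → ℕ} {Q0 Q1 : ℕ}

theorem mono_orCombination (hm0 : Mono g0) (hm1 : Mono g1) :
    Mono fun b => Q1 * Q0 - (Q1 - g1 b) * (Q0 - g0 b) :=
  ((hm1.anti_sub Q1).mul (hm0.anti_sub Q0)).mono_sub _

theorem submod_orCombination (hm0 : Mono g0) (hm1 : Mono g1) (hs0 : Submod g0)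
    (hs1 : Submod g1) (hQ0 : ∀ b, g0 b ≤ Q0) (hQ1 : ∀ b, g1 b ≤ Q1) :
    Submod fun b => Q1 * Q0 - (Q1 - g1 b) * (Q0 - g0 b) :=
  ((hs1.supermod_sub hQ1).mul (hs0.supermod_sub hQ0) (hm1.anti_sub Q1)
    (hm0.anti_sub Q0)).submod_sub
    fun _ => Nat.mul_le_mul (Nat.sub_le _ _) (Nat.sub_le _ _)

theorem orCombination_eq_iff {b : Fin n → Option Bool} (hQ0 : g0 b ≤ Q0) (hQ1 : g1 b ≤ Q1) :
    Q1 * Q0 - (Q1 - g1 b) * (Q0 - g0 b) = Q1 * Q0 ↔ g1 b = Q1 ∨ g0 b = Q0 := by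
  have hle : (Q1 - g1 b) * (Q0 - g0 b) ≤ Q1 * Q0 :=
    Nat.mul_le_mul (Nat.sub_le _ _) (Nat.sub_le _ _)
  have hzero : Q1 * Q0 - (Q1 - g1 b) * (Q0 - g0 b) = Q1 * Q0 ↔
      (Q1 - g1 b) * (Q0 - g0 b) = 0 := by omega
  rw [hzero, Nat.mul_eq_zero]
  omega

end OrCombination

section GoalFunctions

variable {n : ℕ} {f : (Fin n → Bool) → Bool}

theorem KGoalFn.le_goal {k : Bool} {g : (Fin n → Option Bool) → ℕ} {Q : ℕ}
    (h : KGoalFn f k g Q) (b : Fin n → Option Bool) : g b ≤ Q := by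
  by_cases hc : IsKCert f k b
  · exact (h.2.2.1 b hc).le
  · exact (h.2.2.2 b hc).le

theorem KGoalFn.eq_goal_iff {k : Bool} {g : (Fin n → Option Bool) → ℕ} {Q : ℕ}
    (h : KGoalFn f k g Q) (b : Fin n → Option Bool) : g b = Q ↔ IsKCert f k b :=
  ⟨fun hb => by_contra fun hc => (h.2.2.2 b hc).ne hb, h.2.2.1 b⟩

theorem isCert_iff (b : Fin n → Option Bool) :
    IsCert f b ↔ IsKCert f true b ∨ IsKCert f false b := by
  constructor
  · intro h
    have hx : TExtends (fun i => (b i).getD true) b := fun i v hv => by simp [hv]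
    cases hfx : f fun i => (b i).getD true
    · exact Or.inr fun x hxb => by rw [h x _ hxb hx, hfx]
    · exact Or.inl fun x hxb => by rw [h x _ hxb hx, hfx]
  · rintro (h | h) <;> exact fun x y hx hy => by rw [h x hx, h y hy]

theorem goalFn_orCombination {g0 g1 : (Fin n → Option Bool) → ℕ} {Q0 Q1 : ℕ}
    (h0 : KGoalFn f false g0 Q0) (h1 : KGoalFn f true g1 Q1) :
    GoalFn f (fun b => Q1 * Q0 - (Q1 - g1 b) * (Q0 - g0 b)) (Q1 * Q0) := by
  refine ⟨mono_orCombination h0.1 h1.1,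
    submod_orCombination h0.1 h1.1 h0.2.1 h1.2.1 h0.le_goal h1.le_goal, fun b => ?_⟩
  rw [orCombination_eq_iff (h0.le_goal b) (h1.le_goal b), h1.eq_goal_iff, h0.eq_goal_iff,
    isCert_iff]

noncomputable def counterexamples (f : (Fin n → Bool) → Bool) (k : Bool)
    (b : Fin n → Option Bool) : Finset (Fin n → Bool) :=
  univ.filter fun x => TExtends x b ∧ f x ≠ k

theorem textends_update_iff {b : Fin n → Option Bool} {i : Fin n} (hb : b i = none)
    (ℓ : Bool) (x : Fin n → Bool) :
    TExtends x (update b i (some ℓ)) ↔ TExtends x b ∧ x i = ℓ := by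
  constructor
  · intro h
    refine ⟨fun j v hj => h j v ?_, h i ℓ (update_self ..)⟩
    rwa [update_of_ne (by rintro rfl; simp [hb] at hj)]
  · rintro ⟨h, hx⟩ j v hj
    rcases eq_or_ne j i with rfl | hne
    · rw [update_self, Option.some_inj] at hj
      exact hj ▸ hx
    · rw [update_of_ne hne] at hj
      exact h j v hj

theorem counterexamples_anti (k : Bool) {b b' : Fin n → Option Bool} (h : Extends b' b) :
    counterexamples f k b' ⊆ counterexamples f k b := by
  intro x hx
  simp only [counterexamples, mem_filter, mem_univ, true_and] at hx ⊢
  exact ⟨fun j v hj => hx.1 j v (h j v hj), hx.2⟩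

theorem card_counterexamples_le (k : Bool) (b : Fin n → Option Bool) :
    #(counterexamples f k b) ≤ 2 ^ n :=
  (card_le_univ _).trans_eq (by simp)

theorem card_counterexamples_eq_add (k : Bool) {b : Fin n → Option Bool} {i : Fin n}
    (hb : b i = none) (ℓ : Bool) :
    #(counterexamples f k b) =
      #(counterexamples f k (update b i (some ℓ))) +
        #(counterexamples f k (update b i (some !ℓ))) := by
  have hsplit : ∀ m : Bool, counterexamples f k (update b i (some m)) =
      (counterexamples f k b).filter fun x => x i = m := by
    intro m
    ext x
    simp only [counterexamples, mem_filter, mem_univ, true_and, textends_update_iff hb]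
    tauto
  rw [hsplit, hsplit, ← card_filter_add_card_filter_not (fun x => x i = ℓ)]
  congr 2
  ext x
  cases x i <;> cases ℓ <;> simp

theorem supermod_card_counterexamples (k : Bool) :
    Supermod fun b => #(counterexamples f k b) := by
  intro b b' i ℓ hext hb hb'
  have := card_counterexamples_eq_add (f := f) k hb ℓ
  have := card_counterexamples_eq_add (f := f) k hb' ℓ
  have := card_le_card (counterexamples_anti (f := f) k (hext.update i !ℓ))
  dsimp only
  omega

theorem exists_kGoalFn (f : (Fin n → Bool) → Bool) (k : Bool) : ∃ g Q, KGoalFn f k g Q := by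
  refine ⟨fun b => 2 ^ n - #(counterexamples f k b), 2 ^ n,
    Anti.mono_sub (fun _ _ h => card_le_card (counterexamples_anti k h)) _,
    (supermod_card_counterexamples k).submod_sub (card_counterexamples_le k), fun b hb => ?_,
    fun b hb => ?_⟩
  · have : counterexamples f k b = ∅ :=
      filter_eq_empty_iff.mpr fun x _ ⟨hx, hfx⟩ => hfx (hb x hx)
    simp [this]
  · obtain ⟨x, hx, hfx⟩ := not_forall₂.mp hb
    have hpos : 0 < #(counterexamples f k b) :=
      card_pos.mpr ⟨x, by simpa [counterexamples] using ⟨hx, hfx⟩⟩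
    have := card_counterexamples_le (f := f) k b
    show 2 ^ n - _ < 2 ^ n
    omega

theorem exists_kGoalFn_gammaK (f : (Fin n → Bool) → Bool) (k : Bool) :
    ∃ g, KGoalFn f k g (gammaK f k) := by
  obtain ⟨g, Q, h⟩ := exists_kGoalFn f k
  exact Nat.sInf_mem (s := {Q | ∃ g, KGoalFn f k g Q}) ⟨Q, g, h⟩

end GoalFunctions

/-- the "OR" construction: given a 0-goal function `g0` and a 1-goal function
`g1` for `f`, the function `g(b) = Q1·Q0 − (Q1 − g1 b)(Q0 − g0 b)` is monotone, submodular,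
and attains `Q1·Q0` exactly when `g1` or `g0` attains its goal value.
Consequently `Γ(f) ≤ Γ¹(f)·Γ⁰(f)`. -/
theorem stmt11 {n : ℕ} (f : (Fin n → Bool) → Bool)
    (g0 g1 : (Fin n → Option Bool) → ℕ) (Q0 Q1 : ℕ)
    (h0 : KGoalFn f false g0 Q0) (h1 : KGoalFn f true g1 Q1) :
    (Mono (fun b => Q1 * Q0 - (Q1 - g1 b) * (Q0 - g0 b)) ∧
     Submod (fun b => Q1 * Q0 - (Q1 - g1 b) * (Q0 - g0 b)) ∧
     (∀ b, Q1 * Q0 - (Q1 - g1 b) * (Q0 - g0 b) = Q1 * Q0 ↔ (g1 b = Q1 ∨ g0 b = Q0))) ∧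
    gamma f ≤ gammaK f true * gammaK f false := by
  refine ⟨⟨mono_orCombination h0.1 h1.1,
    submod_orCombination h0.1 h1.1 h0.2.1 h1.2.1 h0.le_goal h1.le_goal,
    fun b => orCombination_eq_iff (h0.le_goal b) (h1.le_goal b)⟩, ?_⟩
  obtain ⟨G0, hG0⟩ := exists_kGoalFn_gammaK f false
  obtain ⟨G1, hG1⟩ := exists_kGoalFn_gammaK f true
  exact Nat.sInf_le ⟨_, goalFn_orCombination hG0 hG1⟩
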